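/- Two-dimensional time-domain double-layer potential formula: assuming φ : Γ × ℝ → ℝ is causal (φ(y,t)=0 for t ≤ 0) and C¹ in t, and defining the 3D retarded double-layer potential on the cylinder Γ̌ = Γ × ℝ with density independent of the axial variable z, the change of variables τ = t - c^{-1}√(r²+z²) yields D_{2D}(φ)(x,t) = (1/(2πc²)) ∫_Γ ∫_0^{t-c^{-1}|x-y|} [ ((x-y)·ν_y) φ(y,τ) / ((t-τ)²√((t-τ)²-c^{-2}|x-y|²)) + ((x-y)·ν_y) ∂_τφ(y,τ) / ((t-τ)√((t-τ)²-c^{-2}|x-y|²)) ] dτ ds_y for x ∉ Γ. -/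

import Mathlib

set_option maxHeartbeats 1000000

open MeasureTheory

private lemma deriv_causal (f f' : ℝ → ℝ) (h0 : ∀ s ≤ (0:ℝ), f s = 0)
    (hd : ∀ s, HasDerivAt f (f' s) s) : ∀ s ≤ (0:ℝ), f' s = 0 := by
  intro s hs
  have h1 : HasDerivWithinAt f (f' s) (Set.Iic 0) s := (hd s).hasDerivWithinAt
  have h2 : HasDerivWithinAt f 0 (Set.Iic 0) s :=
    (hasDerivWithinAt_const s _ (0:ℝ)).congr (fun y hy => h0 y hy) (h0 s hs)
  exact (uniqueDiffOn_Iic 0 s hs).eq_deriv _ h1 h2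

private lemma key (c : ℝ) (hc : 0 < c) (A R : ℝ) (hR : 0 ≤ R) (f f' : ℝ → ℝ)
    (h0 : ∀ s ≤ (0:ℝ), f s = 0) (hd : ∀ s, HasDerivAt f (f' s) s) (t : ℝ) :
    (∫ z : ℝ,
        (A / (Real.sqrt (R + z ^ 2)) ^ 3 * f (t - Real.sqrt (R + z ^ 2) / c) +
          A / (c * (R + z ^ 2)) * f' (t - Real.sqrt (R + z ^ 2) / c)))
    = (2 / c ^ 2) * ∫ τ in Set.Ioo 0 (t - Real.sqrt R / c),
        (A * f τ / ((t - τ) ^ 2 * Real.sqrt ((t - τ) ^ 2 - R / c ^ 2)) +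
          A * f' τ / ((t - τ) * Real.sqrt ((t - τ) ^ 2 - R / c ^ 2))) := by
  have h0' : ∀ s ≤ (0:ℝ), f' s = 0 := deriv_causal f f' h0 hd
  set F : ℝ → ℝ := fun z =>
      A / (Real.sqrt (R + z ^ 2)) ^ 3 * f (t - Real.sqrt (R + z ^ 2) / c) +
        A / (c * (R + z ^ 2)) * f' (t - Real.sqrt (R + z ^ 2) / c) with hF
  set G : ℝ → ℝ := fun τ =>
      A * f τ / ((t - τ) ^ 2 * Real.sqrt ((t - τ) ^ 2 - R / c ^ 2)) +
        A * f' τ / ((t - τ) * Real.sqrt ((t - τ) ^ 2 - R / c ^ 2)) with hG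
  by_cases hT : t - Real.sqrt R / c ≤ 0
  · -- degenerate case: everything vanishes
    have hz : ∀ z : ℝ, F z = 0 := by
      intro z
      have h1 : Real.sqrt R ≤ Real.sqrt (R + z ^ 2) :=
        Real.sqrt_le_sqrt (le_add_of_nonneg_right (sq_nonneg z))
      have harg : t - Real.sqrt (R + z ^ 2) / c ≤ 0 := by
        have h2 := (div_le_div_iff_of_pos_right hc).mpr h1
        linarith
      simp [hF, h0 _ harg, h0' _ harg]
    have hL : (∫ z : ℝ, F z) = 0 := by
      simp [funext hz]
    rw [hL, Set.Ioo_eq_empty (by simpa using hT)]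
    simp
  · push_neg at hT
    set T : ℝ := t - Real.sqrt R / c with hTdef
    set Z : ℝ := Real.sqrt (c ^ 2 * t ^ 2 - R) with hZdef
    have hrc : (0:ℝ) ≤ Real.sqrt R / c := div_nonneg (Real.sqrt_nonneg R) hc.le
    have hT' : 0 < t - Real.sqrt R / c := hT
    have ht0 : 0 < t := by linarith
    have hRlt : R < c ^ 2 * t ^ 2 := by
      nlinarith [Real.sq_sqrt hR, Real.sqrt_nonneg R, (div_lt_iff₀ hc).mp (by linarith : Real.sqrt R / c < t)]
    have hZpos : 0 < Z := Real.sqrt_pos.mpr (by linarith)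
    have hu : ∀ τ ∈ Set.Ioo (0:ℝ) T, 0 < (t - τ) ^ 2 - R / c ^ 2 := by
      intro τ hτ
      have h1 : Real.sqrt R / c < t - τ := by
        have := hτ.2; rw [hTdef] at this; linarith
      have h2 : (Real.sqrt R / c) ^ 2 = R / c ^ 2 := by
        rw [div_pow, Real.sq_sqrt hR]
      nlinarith [hrc]
    have hio : ∀ τ ∈ Set.Ioo (0:ℝ) T, 0 < τ ∧ Real.sqrt R / c < t - τ := by
      intro τ hτ
      have h2 : τ < t - Real.sqrt R / c := by rw [← hTdef]; exact hτ.2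
      exact ⟨hτ.1, by linarith⟩
    set g : ℝ → ℝ := fun τ => c * Real.sqrt ((t - τ) ^ 2 - R / c ^ 2) with hg
    set g' : ℝ → ℝ := fun τ =>
        c * (-2 * (t - τ) / (2 * Real.sqrt ((t - τ) ^ 2 - R / c ^ 2))) with hg'
    -- step 1 : full integral equals twice the integral over Ioi 0
    have h1 : (∫ z : ℝ, F z) = 2 * ∫ z in Set.Ioi (0:ℝ), F z := by
      have habs : ∀ z : ℝ, F z = F |z| := by
        intro z; simp only [hF, sq_abs]
      calc (∫ z : ℝ, F z) = ∫ z : ℝ, F |z| := by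
            exact integral_congr_ae (Filter.Eventually.of_forall habs)
        _ = 2 * ∫ z in Set.Ioi (0:ℝ), F z := integral_comp_abs
    -- step 2 : truncate to Ioo 0 Z
    have h2 : (∫ z in Set.Ioi (0:ℝ), F z) = ∫ z in Set.Ioo (0:ℝ) Z, F z := by
      refine setIntegral_eq_of_subset_of_ae_diff_eq_zero (μ := (volume : Measure ℝ)) (f := F)
        (s := Set.Ioo 0 Z) (t := Set.Ioi 0)
        measurableSet_Ioi.nullMeasurableSet Set.Ioo_subset_Ioi_self
        (Filter.Eventually.of_forall ?_)
      rintro z ⟨hz1, hz2⟩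
      have hz1' : 0 < z := hz1
      have hZz : Z ≤ z := by
        by_contra h
        exact hz2 ⟨hz1', lt_of_not_ge h⟩
      have hz2' : c ^ 2 * t ^ 2 - R ≤ z ^ 2 := by
        nlinarith [Real.sq_sqrt (by linarith : (0:ℝ) ≤ c ^ 2 * t ^ 2 - R), Real.sqrt_nonneg (c ^ 2 * t ^ 2 - R)]
      have hct : c * t ≤ Real.sqrt (R + z ^ 2) := by
        rw [show c * t = Real.sqrt ((c * t) ^ 2) from (Real.sqrt_sq (by positivity)).symm]
        exact Real.sqrt_le_sqrt (by nlinarith)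
      have harg : t - Real.sqrt (R + z ^ 2) / c ≤ 0 := by
        have h3 := (div_le_div_iff_of_pos_right hc).mpr hct
        rw [mul_div_cancel_left₀ t hc.ne'] at h3
        linarith
      simp [hF, h0 _ harg, h0' _ harg]
    -- step 3 : the image of the substitution
    have himg : g '' Set.Ioo (0:ℝ) T = Set.Ioo (0:ℝ) Z := by
      ext z
      constructor
      · rintro ⟨τ, hτ, rfl⟩
        have huτ := hu τ hτ
        have hgpos : 0 < g τ := by
          simp only [hg]; exact mul_pos hc (Real.sqrt_pos.mpr huτ)
        refine ⟨hgpos, ?_⟩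
        have hrw : g τ = Real.sqrt (c ^ 2 * (t - τ) ^ 2 - R) := by
          simp only [hg]
          rw [show c * Real.sqrt ((t - τ) ^ 2 - R / c ^ 2)
              = Real.sqrt (c ^ 2) * Real.sqrt ((t - τ) ^ 2 - R / c ^ 2) by
                rw [Real.sqrt_sq hc.le],
            ← Real.sqrt_mul (sq_nonneg c)]
          congr 1
          field_simp
        rw [hrw, hZdef]
        have hq : c ^ 2 * ((t - τ) ^ 2 - R / c ^ 2) = c ^ 2 * (t - τ) ^ 2 - R := by
          field_simp
        apply Real.sqrt_lt_sqrt
          (by nlinarith [mul_pos (by positivity : (0:ℝ) < c ^ 2) huτ])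
        obtain ⟨h1, h2⟩ := hio τ hτ
        have h3 : 0 < t - τ := by linarith
        have h4 : (t - τ) ^ 2 < t ^ 2 := by nlinarith
        nlinarith [mul_lt_mul_of_pos_left h4 (by positivity : (0:ℝ) < c ^ 2)]
      · rintro ⟨hz1, hz2⟩
        have hz2' : z ^ 2 < c ^ 2 * t ^ 2 - R := by
          nlinarith [Real.sq_sqrt (by linarith : (0:ℝ) ≤ c ^ 2 * t ^ 2 - R)]
        refine ⟨t - Real.sqrt (R + z ^ 2) / c, ⟨?_, ?_⟩, ?_⟩
        · have h1 : Real.sqrt (R + z ^ 2) < c * t := by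
            rw [show c * t = Real.sqrt ((c * t) ^ 2) from (Real.sqrt_sq (by positivity)).symm]
            exact Real.sqrt_lt_sqrt (by positivity) (by nlinarith)
          have h2 : Real.sqrt (R + z ^ 2) / c < t := by
            rw [div_lt_iff₀ hc]; linarith [h1]
          linarith
        · have h1 : Real.sqrt R < Real.sqrt (R + z ^ 2) :=
            Real.sqrt_lt_sqrt hR (by nlinarith)
          have h2 : Real.sqrt R / c < Real.sqrt (R + z ^ 2) / c :=
            (div_lt_div_iff_of_pos_right hc).mpr h1
          rw [hTdef]; linarith
        · simp only [hg]
          have hs : (t - (t - Real.sqrt (R + z ^ 2) / c)) = Real.sqrt (R + z ^ 2) / c := by ring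
          rw [hs, div_pow, Real.sq_sqrt (by positivity)]
          rw [show (R + z ^ 2) / c ^ 2 - R / c ^ 2 = (z / c) ^ 2 by ring]
          rw [Real.sqrt_sq (by positivity)]
          field_simp
    -- step 4 : differentiability of the substitution
    have hgd : ∀ τ ∈ Set.Ioo (0:ℝ) T, HasDerivWithinAt g (g' τ) (Set.Ioo 0 T) τ := by
      intro τ hτ
      have huτ := hu τ hτ
      have hd1 : HasDerivAt (fun τ : ℝ => (t - τ) ^ 2 - R / c ^ 2) (-2 * (t - τ)) τ := by
        have h := (((hasDerivAt_id τ).const_sub t).pow 2).sub_const (R / c ^ 2)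
        refine h.congr_deriv ?_
        simp only [id_eq]
        ring
      have hd2 := (hd1.sqrt huτ.ne').const_mul c
      exact hd2.hasDerivWithinAt
    -- step 5 : injectivity
    have hinj : Set.InjOn g (Set.Ioo 0 T) := by
      have : StrictAntiOn g (Set.Ioo 0 T) := by
        intro a ha b hb hab
        have hua := hu a ha
        have hub := hu b hb
        have h1 : (t - b) ^ 2 - R / c ^ 2 < (t - a) ^ 2 - R / c ^ 2 := by
          have h3 : 0 < t - b := by obtain ⟨_, hb2⟩ := hio b hb; linarith
          nlinarith
        simp only [hg]
        exact mul_lt_mul_of_pos_left (Real.sqrt_lt_sqrt hub.le h1) hc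
      exact this.injOn
    -- step 6 : change of variables
    have h4 : (∫ z in Set.Ioo (0:ℝ) Z, F z) = ∫ τ in Set.Ioo (0:ℝ) T, |g' τ| • F (g τ) := by
      rw [← himg]
      exact integral_image_eq_integral_abs_deriv_smul measurableSet_Ioo hgd hinj F
    -- step 7 : pointwise identification
    have h5 : ∀ τ ∈ Set.Ioo (0:ℝ) T, |g' τ| • F (g τ) = (1 / c ^ 2) * G τ := by
      intro τ hτ
      have huτ := hu τ hτ
      have hsu : 0 < Real.sqrt ((t - τ) ^ 2 - R / c ^ 2) := Real.sqrt_pos.mpr huτ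
      have htp : 0 < t - τ := by obtain ⟨_, h2⟩ := hio τ hτ; linarith
      have hg2 : R + (g τ) ^ 2 = (c * (t - τ)) ^ 2 := by
        simp only [hg]
        rw [mul_pow, Real.sq_sqrt huτ.le]
        field_simp
        ring
      have hsq : Real.sqrt (R + (g τ) ^ 2) = c * (t - τ) := by
        rw [hg2, Real.sqrt_sq (by positivity)]
      have habs : |g' τ| = c * (t - τ) / Real.sqrt ((t - τ) ^ 2 - R / c ^ 2) := by
        have he : g' τ = -(c * (t - τ) / Real.sqrt ((t - τ) ^ 2 - R / c ^ 2)) := by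
          simp only [hg']
          field_simp
        rw [he, abs_neg, abs_of_nonneg (by positivity)]
      simp only [hF, hG, smul_eq_mul]
      rw [hsq, show t - c * (t - τ) / c = τ by field_simp; ring, habs, hg2]
      set sv := Real.sqrt ((t - τ) ^ 2 - R / c ^ 2) with hsv
      have hn1 : sv ≠ 0 := ne_of_gt hsu
      have hn2 : t - τ ≠ 0 := ne_of_gt htp
      have hn3 : c ≠ 0 := hc.ne'
      field_simp
    have h6 : (∫ τ in Set.Ioo (0:ℝ) T, |g' τ| • F (g τ))
        = ∫ τ in Set.Ioo (0:ℝ) T, (1 / c ^ 2) * G τ :=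
      setIntegral_congr_fun measurableSet_Ioo h5
    rw [h1, h2, h4, h6, integral_const_mul]
    ring

theorem stmt19 (c : ℝ) (hc : 0 < c) (Γ : Set (ℝ × ℝ)) (μ : Measure (ℝ × ℝ))
    (ν : (ℝ × ℝ) → ℝ × ℝ) (hν : ∀ y ∈ Γ, (ν y).1 ^ 2 + (ν y).2 ^ 2 = 1)
    (φ φ' : (ℝ × ℝ) → ℝ → ℝ)
    (hφcausal : ∀ y : ℝ × ℝ, ∀ s ≤ (0 : ℝ), φ y s = 0)
    (hφdiff : ∀ y s, HasDerivAt (φ y) (φ' y s) s)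
    (x : ℝ × ℝ) (hx : x ∉ Γ) (t : ℝ) :
    (1 / (4 * Real.pi)) * (∫ y in Γ, (∫ z : ℝ,
        (((x.1 - y.1) * (ν y).1 + (x.2 - y.2) * (ν y).2) /
            (Real.sqrt ((x.1 - y.1) ^ 2 + (x.2 - y.2) ^ 2 + z ^ 2)) ^ 3 *
          φ y (t - Real.sqrt ((x.1 - y.1) ^ 2 + (x.2 - y.2) ^ 2 + z ^ 2) / c) +
        ((x.1 - y.1) * (ν y).1 + (x.2 - y.2) * (ν y).2) /
            (c * ((x.1 - y.1) ^ 2 + (x.2 - y.2) ^ 2 + z ^ 2)) *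
          φ' y (t - Real.sqrt ((x.1 - y.1) ^ 2 + (x.2 - y.2) ^ 2 + z ^ 2) / c))) ∂μ)
    = (1 / (2 * Real.pi * c ^ 2)) * (∫ y in Γ,
        (∫ τ in Set.Ioo 0 (t - Real.sqrt ((x.1 - y.1) ^ 2 + (x.2 - y.2) ^ 2) / c),
          (((x.1 - y.1) * (ν y).1 + (x.2 - y.2) * (ν y).2) * φ y τ /
              ((t - τ) ^ 2 *
                Real.sqrt ((t - τ) ^ 2 - ((x.1 - y.1) ^ 2 + (x.2 - y.2) ^ 2) / c ^ 2)) +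
           ((x.1 - y.1) * (ν y).1 + (x.2 - y.2) * (ν y).2) * φ' y τ /
              ((t - τ) *
                Real.sqrt ((t - τ) ^ 2 - ((x.1 - y.1) ^ 2 + (x.2 - y.2) ^ 2) / c ^ 2)))) ∂μ) := by
  have hkey : ∀ y : ℝ × ℝ,
      (∫ z : ℝ,
        (((x.1 - y.1) * (ν y).1 + (x.2 - y.2) * (ν y).2) /
            (Real.sqrt ((x.1 - y.1) ^ 2 + (x.2 - y.2) ^ 2 + z ^ 2)) ^ 3 *
          φ y (t - Real.sqrt ((x.1 - y.1) ^ 2 + (x.2 - y.2) ^ 2 + z ^ 2) / c) +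
        ((x.1 - y.1) * (ν y).1 + (x.2 - y.2) * (ν y).2) /
            (c * ((x.1 - y.1) ^ 2 + (x.2 - y.2) ^ 2 + z ^ 2)) *
          φ' y (t - Real.sqrt ((x.1 - y.1) ^ 2 + (x.2 - y.2) ^ 2 + z ^ 2) / c)))
      = (2 / c ^ 2) *
        (∫ τ in Set.Ioo 0 (t - Real.sqrt ((x.1 - y.1) ^ 2 + (x.2 - y.2) ^ 2) / c),
          (((x.1 - y.1) * (ν y).1 + (x.2 - y.2) * (ν y).2) * φ y τ /
              ((t - τ) ^ 2 *
                Real.sqrt ((t - τ) ^ 2 - ((x.1 - y.1) ^ 2 + (x.2 - y.2) ^ 2) / c ^ 2)) +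
           ((x.1 - y.1) * (ν y).1 + (x.2 - y.2) * (ν y).2) * φ' y τ /
              ((t - τ) *
                Real.sqrt ((t - τ) ^ 2 - ((x.1 - y.1) ^ 2 + (x.2 - y.2) ^ 2) / c ^ 2)))) := by
    intro y
    exact key c hc _ _ (by positivity) (φ y) (φ' y) (hφcausal y) (hφdiff y) t
  rw [integral_congr_ae (Filter.Eventually.of_forall hkey), integral_const_mul]
  have hπ : Real.pi ≠ 0 := Real.pi_ne_zero
  have hc' : c ≠ 0 := hc.ne'
  field_simp
  ring
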